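/- (Initial invariant: every element of Y is covered by a base of Y.) Let E be a finite set with timestamp map τ : E → ℝ, t_w > 0 a real number, and n ≥ 1 a natural number. Let Y ⊆ E and let J ⊆ Y be a base of Y, i.e., J satisfies the layout constraint and for every a ∈ Y \ J the set J ∪ {a} does not satisfy the layout constraint. Then for every a ∈ Y there exists e ∈ J with |τ(e) − τ(a)| < t_w (that is, J ∩ ball(a) ≠ ∅). -/

import Mathlib

/-- A subset `T` of events (with timestamps `τ`) satisfies the layout
constraint if every window `[t, t + t_w)` contains at most `n` events of `T`. -/
def LayoutOk {E : Type*} (τ : E → ℝ) (t_w : ℝ) (n : ℕ) (T : Finset E) : Prop :=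
  ∀ t : ℝ, (T.filter fun e => t ≤ τ e ∧ τ e < t + t_w).card ≤ n

/-- `J` is a base of `Y`: `J ⊆ Y` satisfies the layout constraint and is
maximal with this property, i.e. no element of `Y \ J` can be added. -/
def IsBase {E : Type*} [DecidableEq E] (τ : E → ℝ) (t_w : ℝ) (n : ℕ)
    (Y J : Finset E) : Prop :=
  J ⊆ Y ∧ LayoutOk τ t_w n J ∧
    ∀ a ∈ Y, a ∉ J → ¬ LayoutOk τ t_w n (insert a J)

/-!
If `a ∈ Y` is not in the base `J`, adding it overfills some window `[t, t + t_w)`.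
That window must contain `a` (otherwise `J` would already overfill it) and, since
`n ≥ 1`, at least `n` elements of `J`; any of them lies within `t_w` of `a`.
-/

lemma abs_sub_lt_of_mem_Ico {t w x y : ℝ} (hx : x ∈ Set.Ico t (t + w))
    (hy : y ∈ Set.Ico t (t + w)) : |x - y| < w := by
  obtain ⟨hx₁, hx₂⟩ := hx
  obtain ⟨hy₁, hy₂⟩ := hy
  rw [abs_sub_lt_iff]
  constructor <;> linarith

namespace LayoutOk

variable {E : Type*} [DecidableEq E] {τ : E → ℝ} {t_w : ℝ} {n : ℕ} {T : Finset E} {a : E}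

lemma exists_window_of_not_insert (hT : LayoutOk τ t_w n T)
    (ha : ¬ LayoutOk τ t_w n (insert a T)) :
    ∃ t, τ a ∈ Set.Ico t (t + t_w) ∧
      n ≤ (T.filter fun e => t ≤ τ e ∧ τ e < t + t_w).card := by
  simp only [LayoutOk, not_forall, not_le] at ha
  obtain ⟨t, ht⟩ := ha
  rw [Finset.filter_insert] at ht
  split_ifs at ht with hat
  · refine ⟨t, hat, Nat.lt_succ_iff.mp (ht.trans_le (Finset.card_insert_le _ _))⟩
  · exact absurd (hT t) ht.not_ge

lemma exists_near_of_not_insert (hn : 1 ≤ n) (hT : LayoutOk τ t_w n T)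
    (ha : ¬ LayoutOk τ t_w n (insert a T)) : ∃ e ∈ T, |τ e - τ a| < t_w := by
  obtain ⟨t, hat, hcard⟩ := hT.exists_window_of_not_insert ha
  obtain ⟨e, he⟩ := Finset.card_pos.mp (hn.trans hcard)
  rw [Finset.mem_filter] at he
  exact ⟨e, he.1, abs_sub_lt_of_mem_Ico he.2 hat⟩

end LayoutOk

theorem base_covers_every_element_general
    {E : Type*} [DecidableEq E]
    (τ : E → ℝ) (t_w : ℝ) (ht_w : 0 < t_w) (n : ℕ) (hn : 1 ≤ n)
    (Y J : Finset E) (hJ : IsBase τ t_w n Y J) :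
    ∀ a ∈ Y, ∃ e ∈ J, |τ e - τ a| < t_w := by
  intro a ha
  obtain ⟨-, hJok, hJmax⟩ := hJ
  by_cases haJ : a ∈ J
  · exact ⟨a, haJ, by simpa using ht_w⟩
  · exact hJok.exists_near_of_not_insert hn (hJmax a ha haJ)

/-- initial invariant: if `n ≥ 1` and `J` is a base of `Y`,
then every `a ∈ Y` has some element of `J` in its ball
`(τ a − t_w, τ a + t_w)`. -/
theorem base_covers_every_element
    {E : Type*} [Fintype E] [DecidableEq E]
    (τ : E → ℝ) (t_w : ℝ) (ht_w : 0 < t_w) (n : ℕ) (hn : 1 ≤ n)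
    (Y J : Finset E) (hJ : IsBase τ t_w n Y J) :
    ∀ a ∈ Y, ∃ e ∈ J, |τ e - τ a| < t_w :=
  base_covers_every_element_general τ t_w ht_w n hn Y J hJ
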